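/- arXiv:cs/0211021 — 10 statements merged into one kernel-verified Lean document; each statement's English description precedes it below -/
import Mathlib

section
/- A formula of Łukasiewicz logic built from propositional variables, ⊥, and ⊃ is valid in the MV-algebra [-1,0]_Ł if and only if its material translation is valid over ℚ, where the translation interprets A ⊃ B as (0 ⊓ A) → (B ⊔ v(⊥)) with ⊥ treated as a variable. Concretely: for formulas φ in variables p₁,…,pₖ and ⊥, φ evaluates to ≥ 0 under every valuation v : variables → [-1,0] with v(⊥) = -1 and ⊃ interpreted as a ⊃ b = min(0, b - a), if and only if the corresponding term φ' over ℚ, obtained by interpreting ⊃ as a ⊃' b = -(0 ⊓ a) + (b ⊔ q) where q is a fresh variable ranging over ℚ, evaluates to ≥ 0 under every rational valuation. -/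
/-- Formulas of Łukasiewicz logic built from propositional variables, `⊥`,
and the implication `⊃`. -/
inductive LForm : Type
  | var : ℕ → LForm
  | bot : LForm
  | imp : LForm → LForm → LForm

/-- Evaluation in the MV-algebra `[-1,0]_Ł`: `⊥ = -1`, `a ⊃ b = min 0 (b - a)`. -/
noncomputable def evalL (v : ℕ → ℝ) : LForm → ℝ
  | .var n => v n
  | .bot => -1
  | .imp a b => min 0 (evalL v b - evalL v a)

/-- Material evaluation over ℚ: `⊥` is treated as a variable (value `q`), and
`A ⊃ B` is interpreted as `(0 ⊓ A) → (B ⊔ q) = -(min 0 A) + max B q`. -/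
def evalM (w : ℕ → ℚ) (q : ℚ) : LForm → ℚ
  | .var n => w n
  | .bot => q
  | .imp a b => -(min 0 (evalM w q a)) + max (evalM w q b) q

/-- Real analogue of `evalM`. -/
noncomputable def evalMR (w : ℕ → ℝ) (q : ℝ) : LForm → ℝ
  | .var n => w n
  | .bot => q
  | .imp a b => -(min 0 (evalMR w q a)) + max (evalMR w q b) q

lemma evalMR_cast (w : ℕ → ℚ) (q : ℚ) (φ : LForm) :
    evalMR (fun n => (w n : ℝ)) (q : ℝ) φ = (evalM w q φ : ℝ) := by
  induction φ with
  | var n => rfl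
  | bot => rfl
  | imp a b iha ihb =>
      simp only [evalMR, evalM, iha, ihb]
      push_cast [Rat.cast_min, Rat.cast_max]
      ring_nf

lemma aux_minmax (A B q : ℝ) (hq : q < 0) :
    min 0 (-(min 0 A) + max B q) = min 0 (min 0 (max B q) - min 0 (max A q)) := by
  simp only [min_def, max_def]
  split_ifs <;> linarith

lemma key (φ : LForm) (w : ℕ → ℝ) (q : ℝ) (hq : q < 0) :
    min 0 (max (evalMR w q φ) q)
      = (-q) * evalL (fun n => min 0 (max (w n) q) / (-q)) φ := by
  have hq' : (0:ℝ) < -q := by linarith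
  induction φ with
  | var n =>
      simp only [evalMR, evalL]
      rw [mul_comm, div_mul_cancel₀ _ hq'.ne']
  | bot =>
      simp only [evalMR, evalL, max_self]
      rw [min_eq_right hq.le]; ring
  | imp a b iha ihb =>
      simp only [evalMR, evalL]
      have h1 : max (-(min 0 (evalMR w q a)) + max (evalMR w q b) q) q
          = -(min 0 (evalMR w q a)) + max (evalMR w q b) q := by
        have : q ≤ -(min 0 (evalMR w q a)) + max (evalMR w q b) q := by
          have := le_max_right (evalMR w q b) q
          have : (0:ℝ) ≤ -(min 0 (evalMR w q a)) := by
            have := min_le_left (0:ℝ) (evalMR w q a); linarith [min_le_left (0:ℝ) (evalMR w q a)]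
          linarith [le_max_right (evalMR w q b) q]
        exact max_eq_left this
      rw [h1, aux_minmax _ _ _ hq, iha, ihb, mul_min_of_nonneg _ _ hq'.le,
        mul_zero, mul_sub]
  
lemma evalMR_continuous (φ : LForm) :
    Continuous (fun p : (ℕ → ℝ) × ℝ => evalMR p.1 p.2 φ) := by
  induction φ with
  | var n => exact (continuous_apply n).comp continuous_fst
  | bot => exact continuous_snd
  | imp a b iha ihb => exact ((continuous_const.min iha).neg).add (ihb.max continuous_snd)

lemma evalMR_nonneg (φ : LForm) (h : ∀ (w : ℕ → ℚ) (q : ℚ), 0 ≤ evalM w q φ)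
    (w : ℕ → ℝ) (q : ℝ) : 0 ≤ evalMR w q φ := by
  have hpi : DenseRange (fun (w : ℕ → ℚ) (n : ℕ) => ((w n : ℝ))) := by
    have hr : Set.range (fun (w : ℕ → ℚ) (n : ℕ) => ((w n : ℝ)))
        = Set.pi Set.univ (fun _ : ℕ => Set.range ((↑) : ℚ → ℝ)) := by
      ext x
      constructor
      · rintro ⟨u, rfl⟩ n _
        exact ⟨u n, rfl⟩
      · intro hx
        choose u hu using fun n => hx n (Set.mem_univ n)
        exact ⟨u, funext hu⟩
    rw [DenseRange, hr]
    exact dense_pi _ fun i _ => Rat.denseRange_cast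
  have hd : DenseRange (Prod.map (fun (w : ℕ → ℚ) (n : ℕ) => ((w n : ℝ)))
      (fun q : ℚ => (q : ℝ))) := hpi.prodMap Rat.denseRange_cast
  have hS : IsClosed {p : (ℕ → ℝ) × ℝ | 0 ≤ evalMR p.1 p.2 φ} :=
    isClosed_le continuous_const (evalMR_continuous φ)
  have hsub : Set.range (Prod.map (fun (w : ℕ → ℚ) (n : ℕ) => ((w n : ℝ)))
      (fun q : ℚ => (q : ℝ))) ⊆ {p : (ℕ → ℝ) × ℝ | 0 ≤ evalMR p.1 p.2 φ} := by
    rintro _ ⟨⟨u, r⟩, rfl⟩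
    show (0:ℝ) ≤ evalMR (fun n => (u n : ℝ)) (r : ℝ) φ
    rw [evalMR_cast]
    exact_mod_cast h u r
  have hmem : ((w, q) : (ℕ → ℝ) × ℝ) ∈ closure (Set.range (Prod.map
      (fun (w : ℕ → ℚ) (n : ℕ) => ((w n : ℝ))) (fun q : ℚ => (q : ℝ)))) := by
    rw [hd.closure_range]; trivial
  exact hS.closure_subset_iff.2 hsub hmem

/-- An Ł-formula is valid in `[-1,0]_Ł` iff its material translation is valid
over ℚ. -/
theorem stmt_4 (φ : LForm) :
    (∀ v : ℕ → ℝ, (∀ n, v n ∈ Set.Icc (-1:ℝ) 0) → 0 ≤ evalL v φ) ↔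
    (∀ (w : ℕ → ℚ) (q : ℚ), 0 ≤ evalM w q φ) := by
  constructor
  · intro h w q
    rcases lt_or_ge q 0 with hq | hq
    · have hqR : ((q : ℝ)) < 0 := by exact_mod_cast hq
      have hq' : (0:ℝ) < -(q:ℝ) := by linarith
      have hk := key φ (fun n => (w n : ℝ)) (q : ℝ) hqR
      set v : ℕ → ℝ := fun n => min 0 (max ((w n : ℝ)) (q : ℝ)) / (-(q:ℝ)) with hv_def
      have hv : ∀ n, v n ∈ Set.Icc (-1:ℝ) 0 := by
        intro n
        have h1 : (q:ℝ) ≤ min 0 (max ((w n : ℝ)) (q:ℝ)) :=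
          le_min hqR.le (le_max_right _ _)
        have h2 : min 0 (max ((w n : ℝ)) (q:ℝ)) ≤ 0 := min_le_left _ _
        constructor
        · rw [le_div_iff₀ hq']
          linarith
        · exact div_nonpos_of_nonpos_of_nonneg h2 hq'.le
      have h0 := h v hv
      have hk0 : (0:ℝ) ≤ min 0 (max (evalMR (fun n => (w n : ℝ)) (q:ℝ) φ) (q:ℝ)) := by
        rw [hk]
        exact mul_nonneg hq'.le h0
      have hmax : (0:ℝ) ≤ max (evalMR (fun n => (w n : ℝ)) (q:ℝ) φ) (q:ℝ) :=
        le_trans hk0 (min_le_right _ _)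
      have hE : (0:ℝ) ≤ evalMR (fun n => (w n : ℝ)) (q:ℝ) φ := by
        by_contra hc
        push_neg at hc
        have := max_lt hc hqR
        linarith
      rw [evalMR_cast] at hE
      exact_mod_cast hE
    · cases φ with
      | var n =>
          exfalso
          have := h (fun _ => -1) (by intro n; constructor <;> norm_num)
          norm_num [evalL] at this
      | bot => simpa [evalM] using hq
      | imp a b =>
          have h1 : (0:ℚ) ≤ -(min 0 (evalM w q a)) :=
            neg_nonneg.2 (min_le_left _ _)
          have h2 : q ≤ max (evalM w q b) q := le_max_right _ _
          simp only [evalM]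
          linarith
  · intro h v hv
    have hE : 0 ≤ evalMR v (-1) φ := evalMR_nonneg φ h v (-1)
    have hk := key φ v (-1) (by norm_num)
    have hfun : (fun n => min 0 (max (v n) (-1:ℝ)) / (-(-1:ℝ))) = v := by
      funext n
      rw [max_eq_left (hv n).1, min_eq_right (hv n).2]
      norm_num
    rw [hfun] at hk
    rw [max_eq_left (by linarith : (-1:ℝ) ≤ evalMR v (-1) φ), min_eq_left hE] at hk
    linarith [hk]
end

section
/- Let * be the translation of Ł-formulas into terms over ℚ given by: p* = (p ⊔ q⊥) ⊓ 0 for each propositional variable p, ⊥* = q⊥ ⊓ 0, and (A ⇒ B)* = 0 ⊓ (-(A*) + B*), where q⊥ is a fixed fresh variable. Then a formula φ of Łukasiewicz logic (built from variables, ⊥, and ⇒) is valid in [-1,0]_Ł (i.e., evaluates to 0 under all valuations into [-1,0] with a ⇒ b = min(0, b - a), ⊥ = -1) if and only if φ* evaluates to ≥ 0 under every valuation of its variables (including q⊥) into ℚ. -/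
/-- The translation `*` into terms over ℚ, with the fixed fresh variable `q⊥`
valued `q`: `p* = (p ⊔ q⊥) ⊓ 0`, `⊥* = q⊥ ⊓ 0`,
`(A ⇒ B)* = 0 ⊓ (-(A*) + B*)`. -/
def evalStar (w : ℕ → ℚ) (q : ℚ) : LForm → ℚ
  | .var n => min (max (w n) q) 0
  | .bot => min q 0
  | .imp a b => min 0 (-(evalStar w q a) + evalStar w q b)

/-- number of variable/bot occurrences -/
def cnt : LForm → ℕ
  | .var _ => 1
  | .bot => 0
  | .imp a b => cnt a + cnt b

lemma evalL_lip (v v' : ℕ → ℝ) (ε : ℝ) (h : ∀ n, |v n - v' n| ≤ ε) :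
    ∀ φ, |evalL v φ - evalL v' φ| ≤ cnt φ * ε := by
  have hε : 0 ≤ ε := le_trans (abs_nonneg _) (h 0)
  intro φ
  induction φ with
  | var n => simpa [evalL, cnt] using h n
  | bot => simp [evalL, cnt]
  | imp a b iha ihb =>
      have h1 : |min 0 (evalL v b - evalL v a) - min 0 (evalL v' b - evalL v' a)|
          ≤ |(evalL v b - evalL v a) - (evalL v' b - evalL v' a)| := by
        have := abs_min_sub_min_le_max (0:ℝ) (evalL v b - evalL v a) 0
          (evalL v' b - evalL v' a)
        simpa using this
      have h2 : |(evalL v b - evalL v a) - (evalL v' b - evalL v' a)|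
          ≤ |evalL v b - evalL v' b| + |evalL v a - evalL v' a| := by
        have := abs_sub (evalL v b - evalL v' b) (evalL v a - evalL v' a)
        calc |(evalL v b - evalL v a) - (evalL v' b - evalL v' a)|
            = |(evalL v b - evalL v' b) - (evalL v a - evalL v' a)| := by ring_nf
          _ ≤ |evalL v b - evalL v' b| + |evalL v a - evalL v' a| := abs_sub _ _
      simp only [evalL, cnt]
      push_cast
      nlinarith [h1, h2, iha, ihb]

/-- if q < 0, the rescaled star evaluation matches evalL -/
lemma evalStar_scale (w : ℕ → ℚ) (q : ℚ) (hq : q < 0) (v : ℕ → ℝ)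
    (hv : ∀ n, v n = ((min (max (w n) q) 0 : ℚ) : ℝ) / (-(q:ℝ))) :
    ∀ φ, ((evalStar w q φ : ℚ) : ℝ) = (-(q:ℝ)) * evalL v φ := by
  have hq' : (0:ℝ) < -(q:ℝ) := by exact_mod_cast neg_pos.mpr hq
  intro φ
  induction φ with
  | var n =>
      simp only [evalStar, evalL]
      rw [hv n, mul_div_cancel₀ _ (ne_of_gt hq')]
  | bot =>
      simp only [evalStar, evalL]
      rw [min_eq_left hq.le]
      push_cast; ring
  | imp a b iha ihb =>
      simp only [evalStar, evalL]
      push_cast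
      rw [iha, ihb, mul_min_of_nonneg _ _ hq'.le, mul_zero]
      congr 1
      ring

/-- with q = -1 and w in [-1,0], star evaluation matches evalL -/
lemma evalStar_neg_one (w : ℕ → ℚ) (hw : ∀ n, w n ∈ Set.Icc (-1:ℚ) 0) :
    ∀ φ, ((evalStar w (-1) φ : ℚ) : ℝ) = evalL (fun n => ((w n : ℚ) : ℝ)) φ := by
  intro φ
  induction φ with
  | var n =>
      have h1 := (hw n).1; have h2 := (hw n).2
      simp only [evalStar, evalL]
      rw [max_eq_left h1, min_eq_left h2]
  | bot => norm_num [evalStar, evalL]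
  | imp a b iha ihb =>
      simp only [evalStar, evalL]
      push_cast
      rw [iha, ihb]; ring_nf

/-- An Ł-formula `φ` is valid in `[-1,0]_Ł` iff `φ*` evaluates to `≥ 0` under
every rational valuation of its variables (including `q⊥`). -/
theorem stmt_5 (φ : LForm) :
    (∀ v : ℕ → ℝ, (∀ n, v n ∈ Set.Icc (-1:ℝ) 0) → 0 ≤ evalL v φ) ↔
    (∀ (w : ℕ → ℚ) (q : ℚ), 0 ≤ evalStar w q φ) := by
  constructor
  · intro H w q
    rcases lt_or_ge q 0 with hq | hq
    · -- use the scaling lemma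
      have hq' : (0:ℝ) < -(q:ℝ) := by exact_mod_cast neg_pos.mpr hq
      set v : ℕ → ℝ := fun n => ((min (max (w n) q) 0 : ℚ) : ℝ) / (-(q:ℝ)) with hv
      have hvI : ∀ n, v n ∈ Set.Icc (-1:ℝ) 0 := by
        intro n
        have hlo : q ≤ min (max (w n) q) 0 := le_min (le_max_right _ _) hq.le
        have hhi : min (max (w n) q) 0 ≤ 0 := min_le_right _ _
        constructor
        · rw [hv, le_div_iff₀ hq']
          have : (q:ℝ) ≤ ((min (max (w n) q) 0 : ℚ) : ℝ) := by exact_mod_cast hlo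
          linarith
        · apply div_nonpos_of_nonpos_of_nonneg _ hq'.le
          exact_mod_cast hhi
      have := H v hvI
      have hs := evalStar_scale w q hq v (fun n => rfl) φ
      have : (0:ℝ) ≤ ((evalStar w q φ : ℚ) : ℝ) := by
        rw [hs]; positivity
      exact_mod_cast this
    · -- q ≥ 0: all atoms are 0, so evalStar = 0
      have : ∀ ψ, evalStar w q ψ = 0 := by
        intro ψ
        induction ψ with
        | var n => simp [evalStar, le_max_of_le_right hq]
        | bot => simp [evalStar, hq]
        | imp a b iha ihb => simp [evalStar, iha, ihb]
      simp [this]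
  · intro H v hv
    -- approximation argument
    by_contra hneg
    push_neg at hneg
    set e : ℝ := -evalL v φ with he
    have he0 : 0 < e := by linarith
    set ε : ℝ := e / (cnt φ + 1) with hε
    have hε0 : 0 < ε := by positivity
    have hex : ∀ n, ∃ w' : ℚ, w' ∈ Set.Icc (-1:ℚ) 0 ∧ |v n - (w':ℝ)| ≤ ε := by
      intro n
      obtain ⟨r, hr1, hr2⟩ := exists_rat_btwn (lt_add_of_pos_right (v n) hε0)
      refine ⟨max (-1) (min 0 r), ⟨le_max_left _ _, ?_⟩, ?_⟩
      · exact max_le (by norm_num) (min_le_left _ _)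
      · have h1 := (hv n).1; have h2 := (hv n).2
        push_cast
        rcases le_total (r:ℝ) 0 with h | h
        · rw [min_eq_right h, max_eq_right (by linarith : (-1:ℝ) ≤ (r:ℝ))]
          rw [abs_le]; constructor <;> linarith
        · rw [min_eq_left h, max_eq_right (by norm_num : (-1:ℝ) ≤ (0:ℝ))]
          rw [abs_le]; constructor <;> push_cast <;> linarith
    choose w hwI hwd using hex
    have hlip := evalL_lip v (fun n => ((w n : ℚ) : ℝ)) ε hwd φ
    have hstar := H w (-1)
    have heq := evalStar_neg_one w hwI φ
    have h0 : (0:ℝ) ≤ evalL (fun n => ((w n : ℚ) : ℝ)) φ := by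
      rw [← heq]; exact_mod_cast hstar
    have habs := abs_le.mp hlip
    have hcnt : (0:ℝ) ≤ (cnt φ : ℝ) := Nat.cast_nonneg _
    have hlt : (cnt φ : ℝ) * ε < e := by
      rw [hε, mul_div_assoc', div_lt_iff₀ (by positivity : (0:ℝ) < (cnt φ : ℝ) + 1)]
      nlinarith
    linarith [habs.1]
end

section
/- Let Γ₁, Δ₁, …, Γₙ, Δₙ be finite multisets of propositional variables. The hypersequent Γ₁ ⊢ Δ₁ | … | Γₙ ⊢ Δₙ is valid over ℚ (i.e., for every assignment v of rationals to the variables there exists an i with Σ_{a∈Γᵢ} v(a) ≤ Σ_{b∈Δᵢ} v(b)) if and only if there exist nonnegative integers λ₁,…,λₙ, not all zero, such that the multiset union ⋃ᵢ λᵢ·Γᵢ equals ⋃ᵢ λᵢ·Δᵢ. -/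
/-- A hypersequent is a list of components, each a pair of finite multisets of
propositional variables (coded as naturals). It is valid over ℚ if every
valuation makes the left sum ≤ the right sum in some component. -/
def HValid (G : List (Multiset ℕ × Multiset ℕ)) : Prop :=
  ∀ v : ℕ → ℚ, ∃ S ∈ G, (S.1.map v).sum ≤ (S.2.map v).sum

/-!
Let `cᵢ` be the vector of multiplicities `#Γᵢ(a) - #Δᵢ(a)` over the variables `a` occurring in
the hypersequent. Validity says that no valuation `v` makes every `cᵢ ⬝ᵥ v` positive, and a
combination `∑ λᵢ • Γᵢ = ∑ λᵢ • Δᵢ` is, up to clearing denominators, a witness that `0` lies in the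
rational convex hull of the `cᵢ`. The two are equivalent by Gordan's alternative. Over `ℝ` this is
the separation of `0` from the compact hull by a hyperplane; it descends to `ℚ` because strict
inequalities cut out an open set, which contains a rational point, and because (Carathéodory) a
point of a real hull is a combination of affinely independent vertices, whose unique weights solve
a rational linear system and are therefore rational.
-/

open Finset Matrix Set

theorem exists_sum_smul_eq_of_map {K L ι κ : Type*} [Field K] [Field L] [Fintype ι]
    [Fintype κ] (f : K →+* L) (a : ι → κ → K) (b : κ → K)
    (h : ∃ x : ι → L, ∑ i, x i • (f ∘ a i) = f ∘ b) :
    ∃ x : ι → K, ∑ i, x i • a i = b := by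
  classical
  rw [← Submodule.mem_span_range_iff_exists_fun]
  by_contra hb
  obtain ⟨φ, hφb, hφa⟩ := Submodule.exists_dual_map_eq_bot_of_notMem hb inferInstance
  obtain ⟨y, rfl⟩ := (dotProductEquiv K κ).surjective φ
  have hya : ∀ i, y ⬝ᵥ a i = 0 := fun i ↦
    (Submodule.mem_bot K).1 (hφa ▸ Submodule.mem_map_of_mem (Submodule.subset_span ⟨i, rfl⟩))
  obtain ⟨x, hx⟩ := h
  apply hφb
  apply f.injective
  simp only [dotProductEquiv_apply_apply, map_zero, f.map_dotProduct, ← hx, dotProduct_sum,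
    dotProduct_smul, ← f.map_dotProduct, hya, smul_zero, sum_const_zero]

theorem mem_convexHull_of_ratCast_mem_convexHull {σ : Type*} [Fintype σ] {S : Set (σ → ℚ)}
    {x : σ → ℚ}
    (hx : ((↑) ∘ x : σ → ℝ) ∈ convexHull ℝ ((fun y : σ → ℚ ↦ ((↑) ∘ y : σ → ℝ)) '' S)) :
    x ∈ convexHull ℚ S := by
  obtain ⟨τ, _, z, w, hzS, hz, hw0, hw1, hwz⟩ := eq_pos_convex_span_of_mem_convexHull hx
  choose y hyS hyz using fun t ↦ hzS ⟨t, rfl⟩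
  -- `a t` is the point `y t` with an extra coordinate `none` carrying the constraint `∑ μ = 1`
  let a : τ → Option σ → ℚ := fun t j ↦ j.elim 1 (y t)
  have hsum_apply (μ : τ → ℚ) (j : Option σ) :
      (∑ t, μ t • a t) j = j.elim (∑ t, μ t) (∑ t, μ t • y t) := by
    cases j <;> simp [a]
  obtain ⟨μ, hμ⟩ := exists_sum_smul_eq_of_map (Rat.castHom ℝ) a (fun j ↦ j.elim 1 x) ⟨w, by
    ext j; cases j
    · simpa [a] using hw1
    · simpa [a, ← hyz] using congrFun hwz _⟩
  have hμ1 : ∑ t, μ t = 1 := by simpa [hsum_apply] using congrFun hμ none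
  have hμx : ∑ t, μ t • y t = x := funext fun k ↦ by simpa [hsum_apply] using congrFun hμ (some k)
  have hμw (t : τ) : (μ t : ℝ) = w t := by
    refine hz.eq_of_sum_eq_sum (s := univ) (w₁ := fun t ↦ (μ t : ℝ)) ?_ ?_ t (mem_univ t)
    · rw [hw1]; exact_mod_cast hμ1
    · rw [hwz, ← hμx]; ext k; simp [← hyz]
  have hμ0 (t : τ) : 0 ≤ μ t := by exact_mod_cast (hμw t ▸ hw0 t).le
  exact mem_convexHull_of_exists_fintype μ y hμ0 hμ1 hyS hμx

theorem exists_forall_pos_dotProduct_of_zero_notMem_convexHull {ι σ : Type*} [Finite ι]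
    [Fintype σ] (c : ι → σ → ℝ) (h : 0 ∉ convexHull ℝ (range c)) :
    ∃ v : σ → ℝ, ∀ i, 0 < c i ⬝ᵥ v := by
  obtain ⟨f, u, hf0, hfc⟩ := geometric_hahn_banach_point_closed (convex_convexHull ℝ _)
    ((finite_range c).isCompact_convexHull (𝕜 := ℝ)).isClosed h
  classical
  obtain ⟨v, hv⟩ := (dotProductEquiv ℝ σ).surjective f.toLinearMap
  refine ⟨v, fun i ↦ ?_⟩
  have hfv : ∀ x, f x = v ⬝ᵥ x := fun x ↦ congr($hv.symm x)
  rw [dotProduct_comm, ← hfv]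
  exact (map_zero f ▸ hf0).trans (hfc _ (subset_convexHull ℝ _ ⟨i, rfl⟩))

theorem exists_rat_forall_pos_dotProduct {ι σ : Type*} [Finite ι] [Fintype σ]
    (c : ι → σ → ℚ) (h : ∃ v : σ → ℝ, ∀ i, 0 < ((↑) ∘ c i) ⬝ᵥ v) :
    ∃ v : σ → ℚ, ∀ i, 0 < c i ⬝ᵥ v := by
  have hopen : IsOpen {v : σ → ℝ | ∀ i, 0 < ((↑) ∘ c i) ⬝ᵥ v} := by
    simp only [ofPred_forall]
    exact isOpen_iInter_of_finite fun i ↦ isOpen_lt continuous_const (by fun_prop)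
  obtain ⟨v, hv⟩ := (DenseRange.piMap fun _ ↦ Rat.denseRange_cast).exists_mem_open hopen h
  refine ⟨v, fun i ↦ ?_⟩
  have : 0 < Rat.castHom ℝ (c i ⬝ᵥ v) := by rw [RingHom.map_dotProduct]; exact hv i
  exact Rat.cast_pos.1 this

theorem forall_exists_dotProduct_nonpos_iff {ι σ : Type*} [Fintype ι] [Fintype σ]
    (c : ι → σ → ℚ) : (∀ v, ∃ i, c i ⬝ᵥ v ≤ 0) ↔ 0 ∈ convexHull ℚ (range c) := by
  rw [← not_iff_not]
  simp only [not_forall, not_exists, not_le]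
  refine ⟨fun ⟨v, hv⟩ h0 ↦ ?_, fun h ↦ ?_⟩
  · have hlin : IsLinearMap ℚ fun x : σ → ℚ ↦ x ⬝ᵥ v :=
      ⟨(add_dotProduct · · v), (smul_dotProduct · · v)⟩
    simpa using convexHull_min (range_subset_iff.2 hv) (convex_halfSpace_gt hlin 0) h0
  · refine exists_rat_forall_pos_dotProduct c
      (exists_forall_pos_dotProduct_of_zero_notMem_convexHull _ fun h0 ↦ h ?_)
    apply mem_convexHull_of_ratCast_mem_convexHull
    rw [← range_comp, show ((↑) ∘ (0 : σ → ℚ) : σ → ℝ) = 0 from funext fun _ ↦ Rat.cast_zero]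
    exact h0

lemma Rat.exists_nat_eq_mul_of_nonneg {ι : Type*} [Fintype ι] (w : ι → ℚ) (hw : 0 ≤ w) :
    ∃ d : ℕ, 0 < d ∧ ∃ n : ι → ℕ, ∀ i, (n i : ℚ) = d * w i := by
  refine ⟨∏ i, (w i).den, prod_pos fun i _ ↦ (w i).pos,
    fun i ↦ (∏ j, (w j).den) / (w i).den * (w i).num.toNat, fun i ↦ ?_⟩
  have hdvd := dvd_prod_of_mem (fun j ↦ (w j).den) (mem_univ i)
  rw [Nat.cast_mul, Nat.cast_div hdvd (by simp), ← Int.cast_natCast ((w i).num.toNat),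
    Int.toNat_of_nonneg (Rat.num_nonneg.2 (hw i))]
  conv_rhs => rw [← Rat.num_div_den (w i)]
  ring

lemma zero_mem_convexHull_range_iff_exists_nsmul {ι E : Type*} [Fintype ι] [AddCommGroup E]
    [Module ℚ E] (c : ι → E) :
    0 ∈ convexHull ℚ (range c) ↔ ∃ n : ι → ℕ, n ≠ 0 ∧ ∑ i, n i • c i = 0 := by
  classical
  constructor
  · rw [convexHull_range_eq_exists_affineCombination]
    rintro ⟨s, w, hw0, hw1, hwc⟩
    rw [s.affineCombination_eq_linear_combination _ _ hw1] at hwc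
    obtain ⟨d, hd, n, hn⟩ := Rat.exists_nat_eq_mul_of_nonneg (fun i ↦ if i ∈ s then w i else 0)
      fun i ↦ by by_cases hi : i ∈ s <;> simp [hi, hw0]
    have hsum : ∑ i, (n i : ℚ) = d := by
      simp only [hn, ← mul_sum, sum_ite_mem, Finset.univ_inter, hw1, mul_one]
    refine ⟨n, fun h0 ↦ ?_, ?_⟩
    · exact hd.ne' (by exact_mod_cast (by simpa [h0] using hsum.symm : (d : ℚ) = 0))
    · simp_rw [← Nat.cast_smul_eq_nsmul ℚ, hn, mul_smul, ← smul_sum, ite_smul, zero_smul,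
        sum_ite_mem, Finset.univ_inter, hwc, smul_zero]
  · rintro ⟨n, hn, hnc⟩
    have hN : (0 : ℚ) < ∑ i, (n i : ℚ) := by
      obtain ⟨i, hi⟩ := Function.ne_iff.1 hn
      exact sum_pos' (fun i _ ↦ by positivity)
        ⟨i, mem_univ i, Nat.cast_pos.2 (Nat.pos_of_ne_zero hi)⟩
    refine mem_convexHull_of_exists_fintype (fun i ↦ n i / ∑ j, (n j : ℚ)) c
      (fun i ↦ by positivity) (by rw [← sum_div, div_self hN.ne']) mem_range_self ?_
    simp_rw [div_eq_inv_mul, mul_smul, ← smul_sum, Nat.cast_smul_eq_nsmul, hnc, smul_zero]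

lemma Multiset.sum_map_eq_sum_count {α : Type*} [DecidableEq α] {s : Multiset α}
    {V : Finset α} (hs : s.toFinset ⊆ V) (v : α → ℚ) :
    (s.map v).sum = ∑ a ∈ V, s.count a * v a := by
  rw [Finset.sum_multiset_map_count]
  exact sum_subset hs fun a _ ha ↦ by simp [Multiset.count_eq_zero.2 (by simpa using ha)]

section Hypersequent

variable {α ι : Type*} [DecidableEq α] [Fintype ι] (Γ Δ : ι → Multiset α)

def occurringVars : Finset α := univ.biUnion fun i ↦ (Γ i + Δ i).toFinset

def countDiff (i : ι) (a : occurringVars Γ Δ) : ℚ :=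
  ((Γ i).count (a : α) : ℚ) - (Δ i).count (a : α)

lemma toFinset_subset_occurringVars (i : ι) :
    (Γ i).toFinset ⊆ occurringVars Γ Δ ∧ (Δ i).toFinset ⊆ occurringVars Γ Δ := by
  constructor <;> exact fun a ha ↦ mem_biUnion.2 ⟨i, mem_univ i, by simp_all⟩

lemma sum_map_sub_sum_map_eq_countDiff_dotProduct (v : α → ℚ) (i : ι) :
    ((Γ i).map v).sum - ((Δ i).map v).sum = countDiff Γ Δ i ⬝ᵥ fun a ↦ v a := by
  obtain ⟨hΓ, hΔ⟩ := toFinset_subset_occurringVars Γ Δ i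
  rw [Multiset.sum_map_eq_sum_count hΓ, Multiset.sum_map_eq_sum_count hΔ, ← sum_sub_distrib,
    ← sum_coe_sort]
  simp only [dotProduct, countDiff, sub_mul]

lemma forall_exists_sum_map_le_iff :
    (∀ v : α → ℚ, ∃ i, ((Γ i).map v).sum ≤ ((Δ i).map v).sum) ↔
      ∀ u : occurringVars Γ Δ → ℚ, ∃ i, countDiff Γ Δ i ⬝ᵥ u ≤ 0 := by
  simp only [← sub_nonpos (a := Multiset.sum _), sum_map_sub_sum_map_eq_countDiff_dotProduct]
  refine ⟨fun h u ↦ ?_, fun h v ↦ h _⟩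
  simpa using h fun a ↦ if ha : a ∈ occurringVars Γ Δ then u ⟨a, ha⟩ else 0

lemma sum_nsmul_countDiff_apply (n : ι → ℕ) (a : occurringVars Γ Δ) :
    (∑ i, n i • countDiff Γ Δ i) a =
      ((∑ i, n i • Γ i).count (a : α) : ℚ) - (∑ i, n i • Δ i).count (a : α) := by
  simp [countDiff, Multiset.count_sum', mul_sub, sum_sub_distrib]

lemma sum_nsmul_eq_sum_nsmul_iff (n : ι → ℕ) :
    ∑ i, n i • Γ i = ∑ i, n i • Δ i ↔ ∑ i, n i • countDiff Γ Δ i = 0 := by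
  refine ⟨fun h ↦ funext fun a ↦ by
    rw [sum_nsmul_countDiff_apply, h, sub_self, Pi.zero_apply], fun h ↦ Multiset.ext.2 fun a ↦ ?_⟩
  by_cases ha : a ∈ occurringVars Γ Δ
  · have := congrFun h ⟨a, ha⟩
    rw [sum_nsmul_countDiff_apply, Pi.zero_apply, sub_eq_zero] at this
    exact_mod_cast this
  · have hcount (i : ι) : (Γ i).count a = 0 ∧ (Δ i).count a = 0 := by
      obtain ⟨hΓ, hΔ⟩ := toFinset_subset_occurringVars Γ Δ i
      exact ⟨Multiset.count_eq_zero.2 fun h ↦ ha (hΓ (Multiset.mem_toFinset.2 h)),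
        Multiset.count_eq_zero.2 fun h ↦ ha (hΔ (Multiset.mem_toFinset.2 h))⟩
    simp [Multiset.count_sum', hcount]

end Hypersequent

/-- An atomic hypersequent is valid over ℚ iff there are nonnegative integers
`λᵢ`, not all zero, with `⋃ᵢ λᵢ·Γᵢ = ⋃ᵢ λᵢ·Δᵢ` as multisets. -/
theorem stmt_6 (G : List (Multiset ℕ × Multiset ℕ)) :
    HValid G ↔
      ∃ lam : Fin G.length → ℕ, (∃ i, lam i ≠ 0) ∧
        (Finset.univ.sum fun i => lam i • (G.get i).1) =
        (Finset.univ.sum fun i => lam i • (G.get i).2) := by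
  have hvalid : HValid G ↔
      ∀ v : ℕ → ℚ, ∃ i, ((G.get i).1.map v).sum ≤ ((G.get i).2.map v).sum := by
    simp only [HValid, List.exists_mem_iff_get]
  rw [hvalid, forall_exists_sum_map_le_iff, forall_exists_dotProduct_nonpos_iff,
    zero_mem_convexHull_range_iff_exists_nsmul]
  simp only [← sum_nsmul_eq_sum_nsmul_iff, Function.ne_iff, Pi.zero_apply]
end

section
/- If the hypersequent G | Γ₁ ⊢ Δ₁ | Γ₂ ⊢ Δ₂ (with all components being pairs of finite multisets of variables) is valid over ℚ, then either G | Γ₁∪Γ₂ ⊢ Δ₁∪Δ₂ | Γ₁ ⊢ Δ₁ is valid over ℚ, or G | Γ₁∪Γ₂ ⊢ Δ₁∪Δ₂ | Γ₂ ⊢ Δ₂ is valid over ℚ. -/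
lemma lin_sum (Γ : Multiset ℕ) (v₁ v₂ : ℕ → ℚ) (s t : ℚ) :
    (Γ.map (fun n => s * v₁ n + t * v₂ n)).sum
      = s * (Γ.map v₁).sum + t * (Γ.map v₂).sum := by
  induction Γ using Multiset.induction with
  | empty => simp
  | cons a m ih => simp [ih]; ring

/-- If `G | Γ₁ ⊢ Δ₁ | Γ₂ ⊢ Δ₂` is valid over ℚ then either
`G | Γ₁,Γ₂ ⊢ Δ₁,Δ₂ | Γ₁ ⊢ Δ₁` or `G | Γ₁,Γ₂ ⊢ Δ₁,Δ₂ | Γ₂ ⊢ Δ₂` is valid. -/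
theorem stmt_7 (G : List (Multiset ℕ × Multiset ℕ))
    (Γ₁ Δ₁ Γ₂ Δ₂ : Multiset ℕ)
    (h : HValid (G ++ [(Γ₁, Δ₁), (Γ₂, Δ₂)])) :
    HValid (G ++ [(Γ₁ + Γ₂, Δ₁ + Δ₂), (Γ₁, Δ₁)]) ∨
    HValid (G ++ [(Γ₁ + Γ₂, Δ₁ + Δ₂), (Γ₂, Δ₂)]) := by
  by_contra hc
  push_neg at hc
  obtain ⟨h1, h2⟩ := hc
  unfold HValid at h1 h2
  push_neg at h1 h2
  obtain ⟨v₁, hv₁⟩ := h1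
  obtain ⟨v₂, hv₂⟩ := h2
  -- facts from v₁
  have hG1 : ∀ S ∈ G, ((S.2 : Multiset ℕ).map v₁).sum < (S.1.map v₁).sum :=
    fun S hS => hv₁ S (by simp [hS])
  have hM1 := hv₁ (Γ₁ + Γ₂, Δ₁ + Δ₂) (by simp)
  have hA1 := hv₁ (Γ₁, Δ₁) (by simp)
  have hG2 : ∀ S ∈ G, ((S.2 : Multiset ℕ).map v₂).sum < (S.1.map v₂).sum :=
    fun S hS => hv₂ S (by simp [hS])
  have hM2 := hv₂ (Γ₁ + Γ₂, Δ₁ + Δ₂) (by simp)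
  have hB2 := hv₂ (Γ₂, Δ₂) (by simp)
  simp only at hM1 hA1 hM2 hB2
  rw [Multiset.map_add, Multiset.map_add, Multiset.sum_add, Multiset.sum_add] at hM1 hM2
  set a1 := (Γ₁.map v₁).sum
  set b1 := (Δ₁.map v₁).sum
  set c1 := (Γ₂.map v₁).sum
  set d1 := (Δ₂.map v₁).sum
  set a2 := (Γ₁.map v₂).sum
  set b2 := (Δ₁.map v₂).sum
  set c2 := (Γ₂.map v₂).sum
  set d2 := (Δ₂.map v₂).sum
  -- hA1 : b1 < a1, hM1 : b1+d1 < a1+c1, hB2 : d2 < c2, hM2 : b2+d2 < a2+c2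
  by_cases hy : d1 < c1
  · -- v₁ falsifies the whole original hypersequent
    obtain ⟨S, hS, hle⟩ := h v₁
    simp only [List.mem_append, List.mem_cons, List.not_mem_nil, or_false] at hS
    rcases hS with hS | rfl | rfl
    · exact absurd hle (not_le.2 (hG1 S hS))
    · exact absurd hle (not_le.2 hA1)
    · exact absurd hle (not_le.2 hy)
  · by_cases hp : b2 < a2
    · obtain ⟨S, hS, hle⟩ := h v₂
      simp only [List.mem_append, List.mem_cons, List.not_mem_nil, or_false] at hS
      rcases hS with hS | rfl | rfl
      · exact absurd hle (not_le.2 (hG2 S hS))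
      · exact absurd hle (not_le.2 hp)
      · exact absurd hle (not_le.2 hB2)
    · push_neg at hy hp
      -- now c1 ≤ d1 and a2 ≤ b2; form a positive combination
      set D : ℚ := (b2 - a2) - (d2 - c2) with hD
      set N : ℚ := (d1 - c1) - (b1 - a1) with hN
      have hDpos : 0 < D := by
        have := hB2; have := hp; simp [hD]; linarith
      have hNpos : 0 < N := by
        have := hA1; have := hy; simp [hN]; linarith
      -- key : N * (b2 - a2) + D * (b1 - a1) < 0 etc, both reduce to
      have key : (d1 - c1) * (b2 - a2) - (b1 - a1) * (d2 - c2) < 0 := by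
        nlinarith [mul_nonneg (sub_nonneg.2 hy) (sub_nonneg.2 hp),
          mul_pos (by linarith : (0:ℚ) < a1 - b1) (by linarith : (0:ℚ) < c2 - d2),
          mul_le_mul_of_nonneg_left (by linarith : b2 - a2 ≤ c2 - d2)
            (sub_nonneg.2 hy),
          mul_le_mul_of_nonneg_right (by linarith : d1 - c1 ≤ a1 - b1)
            (by linarith : (0:ℚ) ≤ c2 - d2)]
      obtain ⟨S, hS, hle⟩ := h (fun n => D * v₁ n + N * v₂ n)
      simp only [List.mem_append, List.mem_cons, List.not_mem_nil, or_false] at hS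
      rcases hS with hS | rfl | rfl
      · have h1 := hG1 S hS
        have h2 := hG2 S hS
        rw [lin_sum, lin_sum] at hle
        nlinarith [mul_lt_mul_of_pos_left h1 hDpos, mul_lt_mul_of_pos_left h2 hNpos]
      · rw [lin_sum, lin_sum] at hle
        simp only at hle
        -- hle : D * a1 + N * a2 ≤ D * b1 + N * b2
        nlinarith [key]
      · rw [lin_sum, lin_sum] at hle
        simp only at hle
        nlinarith [key]
end

section
/- Let G = Γ₁ ⊢ Δ₁ | … | Γₙ ⊢ Δₙ be a valid (over ℚ) atomic hypersequent and p a propositional variable such that p occurs strictly more times in Γ₁ than in Δ₁, and for every i = 2,…,n, p occurs at least as many times in Γᵢ as in Δᵢ. Then the hypersequent Γ₂ ⊢ Δ₂ | … | Γₙ ⊢ Δₙ is also valid over ℚ. -/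
lemma sum_update (Γ : Multiset ℕ) (v : ℕ → ℚ) (p : ℕ) (t : ℚ) :
    (Γ.map (fun a => if a = p then t else v a)).sum
      = (Γ.map v).sum + (Γ.count p : ℚ) * (t - v p) := by
  induction Γ using Multiset.induction with
  | empty => simp
  | cons a s ih =>
    by_cases h : a = p
    · subst h; simp [Multiset.count_cons, ih]; ring
    · simp [h, Ne.symm h, Multiset.count_cons, ih]; ring

/-- If the atomic hypersequent `Γ₁ ⊢ Δ₁ | rest` is valid over ℚ, `p` occurs
strictly more often in `Γ₁` than in `Δ₁`, and in every other component `p`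
occurs at least as often on the left as on the right, then `rest` is valid. -/
theorem stmt_8 (Γ₁ Δ₁ : Multiset ℕ) (rest : List (Multiset ℕ × Multiset ℕ)) (p : ℕ)
    (hvalid : HValid ((Γ₁, Δ₁) :: rest))
    (h1 : Δ₁.count p < Γ₁.count p)
    (h2 : ∀ S ∈ rest, S.2.count p ≤ S.1.count p) :
    HValid rest := by
  intro v
  set c : ℚ := (Γ₁.count p : ℚ) with hc
  set d : ℚ := (Δ₁.count p : ℚ) with hd
  have hcd : d < c := by simp only [hc, hd]; exact_mod_cast h1
  have hcd1 : (1 : ℚ) ≤ c - d := by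
    have : (Δ₁.count p : ℤ) + 1 ≤ (Γ₁.count p : ℤ) := by exact_mod_cast h1
    push_cast [hc, hd]
    have : ((Δ₁.count p : ℚ)) + 1 ≤ (Γ₁.count p : ℚ) := by exact_mod_cast this
    linarith
  set δ : ℚ := max 0 (((Δ₁.map v).sum - (Γ₁.map v).sum) / (c - d)) + 1 with hδ
  have hδ0 : 0 ≤ δ := by positivity
  set v' : ℕ → ℚ := fun a => if a = p then v p + δ else v a with hv'
  obtain ⟨S, hS, hle⟩ := hvalid v'
  have key : ∀ Γ : Multiset ℕ,
      (Γ.map v').sum = (Γ.map v).sum + (Γ.count p : ℚ) * δ := by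
    intro Γ
    have := sum_update Γ v p (v p + δ)
    simpa [hv'] using this
  rcases List.mem_cons.mp hS with hS | hS
  · exfalso
    subst hS
    rw [key, key] at hle
    have hub : (Δ₁.map v).sum - (Γ₁.map v).sum ≤
        (c - d) * (((Δ₁.map v).sum - (Γ₁.map v).sum) / (c - d)) := by
      rw [mul_div_cancel₀]
      linarith
    have h3 : (c - d) * δ ≥ ((Δ₁.map v).sum - (Γ₁.map v).sum) + 1 := by
      have hmax : (((Δ₁.map v).sum - (Γ₁.map v).sum) / (c - d)) ≤
          max 0 (((Δ₁.map v).sum - (Γ₁.map v).sum) / (c - d)) := le_max_right _ _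
      have hm := le_trans hub (mul_le_mul_of_nonneg_left hmax (by linarith : (0:ℚ) ≤ c - d))
      rw [hδ, mul_add, mul_one]
      linarith
    nlinarith
  · refine ⟨S, hS, ?_⟩
    rw [key, key] at hle
    have hcount : (S.2.count p : ℚ) ≤ (S.1.count p : ℚ) := by exact_mod_cast h2 S hS
    nlinarith
end

section
/- Over ℚ, the hypersequent rule (S') is sound: if for finite multisets of variables Γ₁, Γ₂, Δ₁, Δ₂ not containing p, and positive integers n, m, the hypersequent G | mΓ₁ ∪ nΓ₂ ⊢ mΔ₁ ∪ nΔ₂ | S is valid (where S is either Γ₁ ∪ {p,…,p (n times)} ⊢ Δ₁ or Γ₂ ⊢ Δ₂ ∪ {p,…,p (m times)}), then the hypersequent G | Γ₁, np ⊢ Δ₁ | Γ₂ ⊢ Δ₂, mp is valid. -/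
theorem le_or_le_of_weighted_le {K : Type*} [Field K] [LinearOrder K] [IsStrictOrderedRing K]
    {m n a₁ a₂ b₁ b₂ x : K} (hm : 0 < m) (hn : 0 < n)
    (h : m * a₁ + n * a₂ ≤ m * b₁ + n * b₂) :
    a₁ + n * x ≤ b₁ ∨ a₂ ≤ b₂ + m * x := by
  refine or_iff_not_imp_left.2 fun h₁ => ?_
  have h₁m : m * b₁ < m * (a₁ + n * x) := mul_lt_mul_of_pos_left (not_le.1 h₁) hm
  have : n * a₂ ≤ n * (b₂ + m * x) := by linarith
  exact le_of_mul_le_mul_left this hn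

theorem HValid.of_append_imp {G H H' : List (Multiset ℕ × Multiset ℕ)} (h : HValid (G ++ H))
    (hH : ∀ v : ℕ → ℚ, (∃ S ∈ H, (S.1.map v).sum ≤ (S.2.map v).sum) →
      ∃ S ∈ H', (S.1.map v).sum ≤ (S.2.map v).sum) :
    HValid (G ++ H') := by
  intro v
  obtain ⟨S, hS, hSv⟩ := h v
  rcases List.mem_append.1 hS with hSG | hSH
  · exact ⟨S, List.mem_append_left _ hSG, hSv⟩
  · obtain ⟨T, hT, hTv⟩ := hH v ⟨S, hSH, hSv⟩
    exact ⟨T, List.mem_append_right _ hT, hTv⟩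

theorem stmt_9_general (G : List (Multiset ℕ × Multiset ℕ))
    (Γ₁ Γ₂ Δ₁ Δ₂ : Multiset ℕ) (p : ℕ) (n m : ℕ)
    (hn : 0 < n) (hm : 0 < m)
    (S : Multiset ℕ × Multiset ℕ)
    (hS : S = (Γ₁ + Multiset.replicate n p, Δ₁) ∨
          S = (Γ₂, Δ₂ + Multiset.replicate m p))
    (h : HValid (G ++ [(m • Γ₁ + n • Γ₂, m • Δ₁ + n • Δ₂), S])) :
    HValid (G ++ [(Γ₁ + Multiset.replicate n p, Δ₁),
                  (Γ₂, Δ₂ + Multiset.replicate m p)]) := by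
  refine h.of_append_imp fun v hv => ?_
  simp only [List.mem_cons, List.not_mem_nil, or_false, exists_eq_or_imp, exists_eq_left]
    at hv ⊢
  rcases hv with hmixed | hSv
  · simp only [Multiset.map_add, Multiset.sum_add, Multiset.map_nsmul, Multiset.sum_nsmul,
      Multiset.map_replicate, Multiset.sum_replicate, nsmul_eq_mul] at hmixed ⊢
    exact le_or_le_of_weighted_le (by exact_mod_cast hm) (by exact_mod_cast hn) hmixed
  · rcases hS with rfl | rfl
    exacts [Or.inl hSv, Or.inr hSv]

/-- Soundness of the rule (S') over ℚ: if
`G | mΓ₁ ∪ nΓ₂ ⊢ mΔ₁ ∪ nΔ₂ | S` is valid, where `S` is either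
`Γ₁, np ⊢ Δ₁` or `Γ₂ ⊢ Δ₂, mp`, `n, m > 0`, and `p` does not occur in
`Γ₁, Γ₂, Δ₁, Δ₂`, then `G | Γ₁, np ⊢ Δ₁ | Γ₂ ⊢ Δ₂, mp` is valid. -/
theorem stmt_9 (G : List (Multiset ℕ × Multiset ℕ))
    (Γ₁ Γ₂ Δ₁ Δ₂ : Multiset ℕ) (p : ℕ) (n m : ℕ)
    (hn : 0 < n) (hm : 0 < m)
    (hp : p ∉ Γ₁ ∧ p ∉ Γ₂ ∧ p ∉ Δ₁ ∧ p ∉ Δ₂)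
    (S : Multiset ℕ × Multiset ℕ)
    (hS : S = (Γ₁ + Multiset.replicate n p, Δ₁) ∨
          S = (Γ₂, Δ₂ + Multiset.replicate m p))
    (h : HValid (G ++ [(m • Γ₁ + n • Γ₂, m • Δ₁ + n • Δ₂), S])) :
    HValid (G ++ [(Γ₁ + Multiset.replicate n p, Δ₁),
                  (Γ₂, Δ₂ + Multiset.replicate m p)]) :=
  stmt_9_general G Γ₁ Γ₂ Δ₁ Δ₂ p n m hn hm S hS h
end

section
/- Over ℚ, the split rule is sound for hypersequent validity: if G | Γ₁∪Γ₂ ⊢ Δ₁∪Δ₂ is valid, then G | Γ₁ ⊢ Δ₁ | Γ₂ ⊢ Δ₂ is valid, where components are interpreted by sums of values and validity means some component has left sum ≤ right sum under every valuation into ℚ. -/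
/-- Soundness of the split rule (S) over ℚ: if `G | Γ₁,Γ₂ ⊢ Δ₁,Δ₂` is valid,
then `G | Γ₁ ⊢ Δ₁ | Γ₂ ⊢ Δ₂` is valid. -/
theorem stmt_10 (G : List (Multiset ℕ × Multiset ℕ)) (Γ₁ Δ₁ Γ₂ Δ₂ : Multiset ℕ)
    (h : HValid (G ++ [(Γ₁ + Γ₂, Δ₁ + Δ₂)])) :
    HValid (G ++ [(Γ₁, Δ₁), (Γ₂, Δ₂)]) := by
  intro v
  obtain ⟨S, hS, hle⟩ := h v
  rcases List.mem_append.1 hS with hG | hlast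
  · exact ⟨S, List.mem_append.2 (Or.inl hG), hle⟩
  · simp only [List.mem_singleton] at hlast
    subst hlast
    simp only [Multiset.map_add, Multiset.sum_add] at hle
    by_cases h1 : (Γ₁.map v).sum ≤ (Δ₁.map v).sum
    · exact ⟨(Γ₁, Δ₁), by simp, h1⟩
    · exact ⟨(Γ₂, Δ₂), by simp, by linarith⟩
end

section
/- The conjunction-left rule of GA is invertible over ℚ: the hypersequent G | Γ, A ⊢ Δ | Γ, B ⊢ Δ is valid (over ℚ) if and only if G | Γ, A⊓B ⊢ Δ is valid, where ⊓ is interpreted as min. -/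
/-- Terms of abelian logic in the language `{+, ⊓, ⊔, →, 0}` over variables. -/
inductive ATerm : Type
  | var : ℕ → ATerm
  | zero : ATerm
  | add : ATerm → ATerm → ATerm
  | meet : ATerm → ATerm → ATerm
  | join : ATerm → ATerm → ATerm
  | imp : ATerm → ATerm → ATerm

/-- Interpretation over ℚ: `v(A → B) = v(B) - v(A)`, `⊓` is `min`, `⊔` is `max`. -/
def evalA (v : ℕ → ℚ) : ATerm → ℚ
  | .var n => v n
  | .zero => 0
  | .add a b => evalA v a + evalA v b
  | .meet a b => min (evalA v a) (evalA v b)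
  | .join a b => max (evalA v a) (evalA v b)
  | .imp a b => evalA v b - evalA v a

/-- Hypersequent validity over ℚ: every valuation makes the left sum ≤ the
right sum in some component. -/
def HValidA (G : List (Multiset ATerm × Multiset ATerm)) : Prop :=
  ∀ v : ℕ → ℚ, ∃ S ∈ G, ((S.1.map (evalA v)).sum ≤ (S.2.map (evalA v)).sum)

/-- The conjunction-left rule of GA is invertible over ℚ:
`G | Γ, A ⊢ Δ | Γ, B ⊢ Δ` is valid iff `G | Γ, A ⊓ B ⊢ Δ` is valid. -/
theorem stmt_12 (G : List (Multiset ATerm × Multiset ATerm))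
    (Γ Δ : Multiset ATerm) (A B : ATerm) :
    HValidA (G ++ [(Γ + {A}, Δ), (Γ + {B}, Δ)]) ↔
    HValidA (G ++ [(Γ + {ATerm.meet A B}, Δ)]) := by
  constructor
  · intro h v
    obtain ⟨S, hS, hle⟩ := h v
    rcases List.mem_append.1 hS with hG | hR
    · exact ⟨S, List.mem_append.2 (Or.inl hG), hle⟩
    · refine ⟨(Γ + {ATerm.meet A B}, Δ), List.mem_append.2 (Or.inr (by simp)), ?_⟩
      have key : evalA v (ATerm.meet A B) ≤ evalA v A ∧
          evalA v (ATerm.meet A B) ≤ evalA v B := by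
        simp [evalA]
      simp only [List.mem_cons, List.mem_singleton, List.not_mem_nil, or_false] at hR
      rcases hR with h1 | h1 <;> subst h1 <;>
        simp only [Multiset.map_add, Multiset.sum_add, Multiset.map_singleton,
          Multiset.sum_singleton] at hle ⊢ <;> linarith [key.1, key.2]
  · intro h v
    obtain ⟨S, hS, hle⟩ := h v
    rcases List.mem_append.1 hS with hG | hR
    · exact ⟨S, List.mem_append.2 (Or.inl hG), hle⟩
    · simp only [List.mem_singleton] at hR
      subst hR
      rcases min_cases (evalA v A) (evalA v B) with ⟨heq, _⟩ | ⟨heq, _⟩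
      · refine ⟨(Γ + {A}, Δ), List.mem_append.2 (Or.inr (by simp)), ?_⟩
        simp only [Multiset.map_add, Multiset.sum_add, Multiset.map_singleton,
          Multiset.sum_singleton, evalA, heq] at hle ⊢
        linarith
      · refine ⟨(Γ + {B}, Δ), List.mem_append.2 (Or.inr (by simp)), ?_⟩
        simp only [Multiset.map_add, Multiset.sum_add, Multiset.map_singleton,
          Multiset.sum_singleton, evalA, heq] at hle ⊢
        linarith
end

section
/- In every lattice-ordered abelian group, the characteristic Łukasiewicz axiom under the ⇒ interpretation is valid: for all a, b, the element ((a ⇒ b) ⇒ b) ⇒ ((b ⇒ a) ⇒ a) equals 0, where x ⇒ y = 0 ⊓ (-x + y). -/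
/-- The positive implication `x ⇒ y = 0 ⊓ (-x + y)` in a lattice-ordered abelian group. -/
def pimp {G : Type*} [Lattice G] [AddCommGroup G] (x y : G) : G := 0 ⊓ (-x + y)

lemma pimp_pimp {G : Type*} [Lattice G] [AddCommGroup G]
    [CovariantClass G G (· + ·) (· ≤ ·)] (a b : G) :
    pimp (pimp a b) b = 0 ⊓ (a ⊔ b) := by
  unfold pimp
  rw [neg_inf, neg_zero, add_comm, add_sup, add_zero, neg_add_rev, neg_neg,
    add_neg_cancel_left, sup_comm]

/-- The characteristic Łukasiewicz axiom under the `⇒` interpretation is valid: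
`((a ⇒ b) ⇒ b) ⇒ ((b ⇒ a) ⇒ a) = 0`. -/
theorem stmt_14 {G : Type*} [Lattice G] [AddCommGroup G]
    [CovariantClass G G (· + ·) (· ≤ ·)] (a b : G) :
    pimp (pimp (pimp a b) b) (pimp (pimp b a) a) = 0 := by
  rw [pimp_pimp, pimp_pimp, sup_comm b a]
  unfold pimp
  rw [neg_add_cancel, inf_idem]
end

section
/- Validity of a labelled atomic sequent over ℚ is equivalent to existence of a matching family of labelling functions: for a labelled sequent Γ ⊢ Δ where Γ, Δ are finite multisets of pairs (x, p) of a label and a propositional variable, the sequent is valid (for every rational valuation v of variables, some labelling function f : atomic labels → {0,1}, extended multiplicatively to all labels with f(1)=1, satisfies Σ_{(x,p)∈Γ, f(x)=1} v(p) ≤ Σ_{(y,q)∈Δ, f(y)=1} v(q)) if and only if there exist finitely many labelling functions f₁,…,fₙ such that the multiset ⋃ᵢ fᵢ(Γ) equals ⋃ᵢ fᵢ(Δ), where f(Γ) = {p : (x,p) ∈ Γ, f(x) = 1}. -/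
/-- A label is a finite product of atomic labels (the empty multiset is the
unit label `1`). A labelling function `f : ℕ → Bool` on atomic labels extends
multiplicatively: a label is sent to `1` iff all its atomic labels are. -/
def labelOn (f : ℕ → Bool) (x : Multiset ℕ) : Prop := ∀ a ∈ x, f a = true

instance (f : ℕ → Bool) : DecidablePred (labelOn f) := fun x =>
  inferInstanceAs (Decidable (∀ a ∈ x, f a = true))

/-- `fApp f Γ` is the multiset of variables of `Γ` whose labels are mapped
to `1` by `f`. -/
def fApp (f : ℕ → Bool) (Γ : Multiset (Multiset ℕ × ℕ)) : Multiset ℕ :=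
  (Γ.filter fun z => labelOn f z.1).map Prod.snd

/-!
If the sequent is valid, consider for each labelling function `f` the integer vector
`count(f(Δ)) - count(f(Γ))`, indexed by the finitely many variables that occur; there are only
finitely many such vectors. Validity says that no rational valuation pairs negatively with all
of them, so by Hahn–Banach separation (and density of `ℚⁿ` in `ℝⁿ`, which turns a real
separating functional into a rational valuation) `0` lies in their real convex hull.
By Carathéodory it is a convex combination of affinely independent ones; these have rational
coordinates, so the unique barycentric weights are rational, and clearing denominators gives a
multiset of labelling functions with `∑ fᵢ(Γ) = ∑ fᵢ(Δ)`. Conversely, summing the valuation over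
such a family shows that some `fᵢ` satisfies the inequality.
-/

open Finset

section Gordan

variable {κ ι : Type*}

theorem zero_mem_convexHull_of_forall_exists_nonneg [Fintype ι] (w : κ → ι → ℚ)
    (hw : (Set.range w).Finite) (h : ∀ v : ι → ℚ, ∃ k, 0 ≤ ∑ i, w k i * v i) :
    (0 : ι → ℝ) ∈ convexHull ℝ (Set.range fun k i => (w k i : ℝ)) := by
  classical
  set S := Set.range fun k i => (w k i : ℝ)
  have hS : S.Finite :=
    (hw.image fun x i => (x i : ℝ)).subset (by rintro _ ⟨k, rfl⟩; exact ⟨w k, ⟨k, rfl⟩, rfl⟩)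
  by_contra h0
  obtain ⟨φ, u, hφ, hu⟩ := geometric_hahn_banach_closed_point (convex_convexHull ℝ S)
    (hS.isClosed_convexHull (𝕜 := ℝ)) h0
  set r : ι → ℝ := fun i => φ fun j => if i = j then 1 else 0
  have hφr (y : ι → ℝ) : φ y = ∑ i, y i * r i :=
    (φ.toLinearMap.pi_apply_eq_sum_univ y).trans (sum_congr rfl fun i _ => smul_eq_mul _ _)
  set U := ⋂ y ∈ S, {x : ι → ℝ | ∑ i, y i * x i < 0}
  have hU : IsOpen U := hS.isOpen_biInter fun y _ => isOpen_lt (by fun_prop) continuous_const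
  have hrU : r ∈ U := Set.mem_iInter₂.2 fun y hy =>
    (hφr y ▸ hφ y (subset_convexHull ℝ S hy)).trans (by simpa using hu)
  obtain ⟨q, hq⟩ := (DenseRange.piMap fun _ => Rat.denseRange_cast).exists_mem_open hU ⟨r, hrU⟩
  obtain ⟨k, hk⟩ := h q
  have hneg := Set.mem_iInter₂.1 hq _ ⟨k, rfl⟩
  simp only [Set.mem_ofPred_eq, Pi.map_apply] at hneg
  exact hk.not_gt (by exact_mod_cast hneg)

theorem exists_ratCast_eq_of_affineIndependent {J : Type*} [Fintype J] (z : J → ι → ℚ)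
    (hz : AffineIndependent ℝ fun j i => (z j i : ℝ)) (μ : J → ℝ) (hμ : ∑ j, μ j = 1)
    (x : ι → ℚ) (hx : ∑ j, μ j • (fun i => (z j i : ℝ)) = fun i => (x i : ℝ)) :
    ∃ q : J → ℚ, ∀ j, (q j : ℝ) = μ j := by
  -- A `ℚ`-linear retraction `π : ℝ → ℚ` turns `μ` into rational weights of the same rational
  -- point, and affine independence forces them to be `μ` itself.
  obtain ⟨π, hπ⟩ := (Algebra.linearMap ℚ ℝ).exists_leftInverse_of_injective
    (LinearMap.ker_eq_bot.2 (algebraMap ℚ ℝ).injective)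
  have hπcast (a : ℚ) : π a = a := by simpa using LinearMap.congr_fun hπ a
  have hπmul (a : ℚ) (t : ℝ) : π (a * t) = a * π t := by
    rw [← Rat.smul_def, map_smul, smul_eq_mul]
  refine ⟨fun j => π (μ j), fun j => hz.eq_of_sum_eq_sum (s := univ)
    (w₁ := fun j => (π (μ j) : ℝ)) (w₂ := μ) ?_ ?_ j (mem_univ j)⟩
  · rw [hμ, ← Rat.cast_sum, ← map_sum, hμ, ← Rat.cast_one, hπcast, Rat.cast_one]
  · ext i
    have hxi := congrFun hx i
    simp only [Finset.sum_apply, Pi.smul_apply, smul_eq_mul] at hxi ⊢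
    calc ∑ j, (π (μ j) : ℝ) * z j i = ((∑ j, z j i * π (μ j) : ℚ) : ℝ) := by
          push_cast; simp only [mul_comm]
      _ = π (∑ j, μ j * z j i) := by simp only [map_sum, mul_comm (μ _), hπmul]
      _ = ∑ j, μ j * z j i := by rw [hxi, hπcast]

theorem exists_pos_nat_mul_eq_natCast {J : Type*} [Fintype J] (q : J → ℚ) (hq : ∀ j, 0 ≤ q j) :
    ∃ N : ℕ, 0 < N ∧ ∀ j, ∃ m : ℕ, (m : ℚ) = N * q j := by
  refine ⟨∏ j, (q j).den, Finset.prod_pos fun j _ => (q j).den_pos, fun j => ?_⟩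
  obtain ⟨c, hc⟩ := Finset.dvd_prod_of_mem (fun j => (q j).den) (mem_univ j)
  refine ⟨(q j).num.toNat * c, ?_⟩
  rw [hc, Nat.cast_mul, Nat.cast_mul, ← Int.cast_natCast,
    Int.toNat_of_nonneg (Rat.num_nonneg.2 (hq j)), ← Rat.mul_den_eq_num]
  ring

theorem exists_multiset_sum_map_eq_zero_of_pos_weights {J V : Type*} [Fintype J] [Nonempty J]
    [AddCommMonoid V] [Module ℚ V] (k : J → κ) (w : κ → V) (q : J → ℚ) (hq : ∀ j, 0 < q j)
    (h : ∑ j, q j • w (k j) = 0) : ∃ M : Multiset κ, M ≠ 0 ∧ (M.map w).sum = 0 := by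
  obtain ⟨N, hN, hm⟩ := exists_pos_nat_mul_eq_natCast q fun j => (hq j).le
  choose m hm using hm
  refine ⟨∑ j, Multiset.replicate (m j) (k j), ?_, ?_⟩
  · obtain ⟨j⟩ := ‹Nonempty J›
    have hmj : 0 < m j := by
      exact_mod_cast (hm j).symm ▸ mul_pos (Nat.cast_pos.2 hN) (hq j)
    have hkj : k j ∈ ∑ j, Multiset.replicate (m j) (k j) :=
      Multiset.mem_sum.2 ⟨j, mem_univ j, Multiset.mem_replicate.2 ⟨hmj.ne', rfl⟩⟩
    exact fun h0 => Multiset.notMem_zero (k j) (h0 ▸ hkj)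
  · calc ((∑ j, Multiset.replicate (m j) (k j)).map w).sum
        = ∑ j, m j • w (k j) := by
          rw [← Multiset.coe_sumAddMonoidHom, ← Multiset.coe_mapAddMonoidHom,
            ← AddMonoidHom.comp_apply, map_sum]
          simp [Multiset.map_replicate, Multiset.sum_replicate]
      _ = (N : ℚ) • ∑ j, q j • w (k j) := by
          simp only [← Nat.cast_smul_eq_nsmul ℚ, hm, Finset.smul_sum, mul_smul]
      _ = 0 := by rw [h, smul_zero]

theorem exists_multiset_sum_map_eq_zero_of_forall_exists_nonneg [Fintype ι] (w : κ → ι → ℚ)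
    (hw : (Set.range w).Finite) (h : ∀ v : ι → ℚ, ∃ k, 0 ≤ ∑ i, w k i * v i) :
    ∃ M : Multiset κ, M ≠ 0 ∧ (M.map w).sum = 0 := by
  obtain ⟨J, _, z, μ, hzw, hz, hμ, hμ1, hμz⟩ :=
    eq_pos_convex_span_of_mem_convexHull (zero_mem_convexHull_of_forall_exists_nonneg w hw h)
  choose k hk using fun j => hzw (Set.mem_range_self j)
  obtain rfl : (fun j i => (w (k j) i : ℝ)) = z := funext hk
  obtain ⟨q, hq⟩ := exists_ratCast_eq_of_affineIndependent (fun j => w (k j)) hz μ hμ1 0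
    (hμz.trans (funext fun _ => Rat.cast_zero.symm))
  have : Nonempty J := by
    by_contra hJ
    simp [not_nonempty_iff.1 hJ] at hμ1
  refine exists_multiset_sum_map_eq_zero_of_pos_weights k w q
    (fun j => by exact_mod_cast (hq j).symm ▸ hμ j) (funext fun i => ?_)
  have hi := congrFun hμz i
  simp only [Finset.sum_apply, Pi.smul_apply, smul_eq_mul, ← hq, Pi.zero_apply] at hi ⊢
  exact_mod_cast hi

end Gordan

section MultisetGordan

variable {κ α : Type*}

theorem Multiset.sum_map_eq_sum_count_mul_of_toFinset_subset [DecidableEq α] {R : Type*}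
    [Semiring R] {m : Multiset α} {X : Finset α} (hm : m.toFinset ⊆ X) (v : α → R) :
    (m.map v).sum = ∑ a ∈ X, m.count a * v a := by
  rw [Finset.sum_multiset_map_count]
  simp only [nsmul_eq_mul]
  exact Finset.sum_subset hm fun a _ ha => by
    rw [Multiset.count_eq_zero_of_notMem (by simpa using ha), Nat.cast_zero, zero_mul]

theorem exists_sum_map_eq_sum_map_of_forall_exists_le (A B : κ → Multiset α)
    (hAB : (Set.range fun k => (A k, B k)).Finite)
    (h : ∀ v : α → ℚ, ∃ k, ((A k).map v).sum ≤ ((B k).map v).sum) :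
    ∃ M : Multiset κ, M ≠ 0 ∧ (M.map A).sum = (M.map B).sum := by
  classical
  set X : Finset α := hAB.toFinset.biUnion fun AB => (AB.1 + AB.2).toFinset
  have hX (k : κ) : (A k).toFinset ⊆ X ∧ (B k).toFinset ⊆ X := by
    have hk := subset_biUnion_of_mem (fun AB : Multiset α × Multiset α => (AB.1 + AB.2).toFinset)
      (hAB.mem_toFinset.2 ⟨k, rfl⟩)
    rwa [Multiset.toFinset_add, union_subset_iff] at hk
  let w : κ → X → ℚ := fun k a => (B k).count (a : α) - (A k).count (a : α)
  have hw : (Set.range w).Finite :=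
    (hAB.image fun AB (a : X) => ((AB.2.count (a : α) : ℚ) - AB.1.count (a : α))).subset
      (by rintro _ ⟨k, rfl⟩; exact ⟨_, ⟨k, rfl⟩, rfl⟩)
  obtain ⟨M, hM, hMw⟩ := exists_multiset_sum_map_eq_zero_of_forall_exists_nonneg w hw fun v => by
    obtain ⟨k, hk⟩ := h fun a => if ha : a ∈ X then v ⟨a, ha⟩ else 0
    refine ⟨k, ?_⟩
    rw [Multiset.sum_map_eq_sum_count_mul_of_toFinset_subset (hX k).1,
      Multiset.sum_map_eq_sum_count_mul_of_toFinset_subset (hX k).2, ← sub_nonneg,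
      ← Finset.sum_sub_distrib, ← Finset.sum_coe_sort X] at hk
    simpa [w, sub_mul] using hk
  refine ⟨M, hM, Multiset.ext.2 fun a => ?_⟩
  rw [Multiset.count_sum, Multiset.count_sum]
  by_cases ha : a ∈ X
  · have hMa := congrFun hMw ⟨a, ha⟩
    simp only [Pi.multiset_sum_apply, Multiset.map_map, Function.comp_def, w, Multiset.sum_map_sub,
      Pi.zero_apply, sub_eq_zero] at hMa
    exact Nat.cast_injective (R := ℚ) (by
      simpa only [Nat.cast_multiset_sum, Multiset.map_map, Function.comp_def] using hMa.symm)
  · have hA (k : κ) : (A k).count a = 0 :=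
      Multiset.count_eq_zero.2 fun h => ha ((hX k).1 (by simpa using h))
    have hB (k : κ) : (B k).count a = 0 :=
      Multiset.count_eq_zero.2 fun h => ha ((hX k).2 (by simpa using h))
    simp [hA, hB]

theorem Finset.exists_sum_map_le_sum_map_of_sum_eq {ι R : Type*} [AddCommMonoid R] [LinearOrder R]
    [IsOrderedCancelAddMonoid R] {s : Finset ι} (hs : s.Nonempty) {A B : ι → Multiset α}
    (h : ∑ i ∈ s, A i = ∑ i ∈ s, B i) (v : α → R) :
    ∃ i ∈ s, ((A i).map v).sum ≤ ((B i).map v).sum := by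
  refine Finset.exists_le_of_sum_le hs (le_of_eq ?_)
  have hv (C : ι → Multiset α) :=
    map_sum (Multiset.sumAddMonoidHom.comp (Multiset.mapAddMonoidHom v)) C s
  simp only [AddMonoidHom.comp_apply, Multiset.coe_sumAddMonoidHom,
    Multiset.coe_mapAddMonoidHom] at hv
  rw [← hv, ← hv, h]

theorem Fin.sum_univ_fun_getElem_toList {ι M : Type*} [AddCommMonoid M] (m : Multiset ι)
    (f : ι → M) : ∑ i : Fin m.toList.length, f m.toList[(i : ℕ)] = (m.map f).sum := by
  rw [Fin.sum_univ_fun_getElem, ← Multiset.sum_coe, ← Multiset.map_coe, Multiset.coe_toList]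

end MultisetGordan

theorem fApp_le (f : ℕ → Bool) (Γ : Multiset (Multiset ℕ × ℕ)) : fApp f Γ ≤ Γ.map Prod.snd :=
  Multiset.map_le_map (Multiset.filter_le _ _)

theorem finite_range_fApp_prod (Γ Δ : Multiset (Multiset ℕ × ℕ)) :
    (Set.range fun f => (fApp f Γ, fApp f Δ)).Finite :=
  ((Γ.map Prod.snd).powerset.finite_toSet.prod (Δ.map Prod.snd).powerset.finite_toSet).subset
    (by rintro _ ⟨f, rfl⟩; simp [Multiset.mem_powerset, fApp_le])

/-- A labelled atomic sequent `Γ ⊢ Δ` is valid over ℚ (for every valuation,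
some labelling function makes the selected left sum ≤ the selected right sum)
iff there exist finitely many labelling functions `f₁, …, fₙ` (n ≥ 1) with
`⋃ᵢ fᵢ(Γ) = ⋃ᵢ fᵢ(Δ)` as multisets. -/
theorem stmt_19 (Γ Δ : Multiset (Multiset ℕ × ℕ)) :
    (∀ v : ℕ → ℚ, ∃ f : ℕ → Bool,
        ((fApp f Γ).map v).sum ≤ ((fApp f Δ).map v).sum) ↔
    (∃ n : ℕ, 0 < n ∧ ∃ fs : Fin n → ℕ → Bool,
        (Finset.univ.sum fun i => fApp (fs i) Γ) =
        (Finset.univ.sum fun i => fApp (fs i) Δ)) := by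
  constructor
  · intro h
    obtain ⟨M, hM, hMeq⟩ := exists_sum_map_eq_sum_map_of_forall_exists_le _ _
      (finite_range_fApp_prod Γ Δ) h
    refine ⟨M.toList.length, by simpa using Multiset.card_pos.2 hM, fun i => M.toList[(i : ℕ)], ?_⟩
    exact (Fin.sum_univ_fun_getElem_toList M _).trans
      (hMeq.trans (Fin.sum_univ_fun_getElem_toList M _).symm)
  · rintro ⟨n, hn, fs, hfs⟩ v
    obtain ⟨i, -, hi⟩ := Finset.exists_sum_map_le_sum_map_of_sum_eq
      (Finset.univ_nonempty_iff.2 ⟨⟨0, hn⟩⟩) hfs v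
    exact ⟨fs i, hi⟩
end
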